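/- Let Ω be a measurable subset of ℝⁿ (n ≥ 1) and let A be a finite-valued non-degenerate Young function. Let {u_k} ⊂ L^A(Ω) and u ∈ L^A(Ω) be such that ∫_Ω A(|u_k − u|/λ₀) dx → 0 as k → ∞ for some λ₀ > 0, and let λ₁ > 0 be such that ∫_Ω A(|u|/λ₁) dx < ∞. Then ∫_Ω A(|u_k|/λ) dx → ∫_Ω A(|u|/λ) dx as k → ∞ for every λ ≥ 2·max{λ₀, λ₁}. In particular, if {u_k} ⊂ E^A(Ω), u ∈ E^A(Ω) and ‖u_k − u‖_{L^A(Ω)} → 0, then this convergence of modulars holds for every λ > 0. -/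

import Mathlib

open MeasureTheory Filter Set Topology ENNReal NNReal RealInnerProductSpace

noncomputable section

/-- Euclidean space `ℝⁿ`. -/
abbrev En (n : ℕ) : Type := EuclideanSpace ℝ (Fin n)

/-- A Young function: a convex, left-continuous function `A : [0,∞) → [0,∞]` with `A 0 = 0`,
not identically `0` and not identically `∞` on `(0,∞)`. -/
structure YoungFunction : Type where
  toFun : ℝ≥0 → ℝ≥0∞
  map_zero' : toFun 0 = 0
  convex' : ∀ s t a b : ℝ≥0, a + b = 1 →
    toFun (a * s + b * t) ≤ (a : ℝ≥0∞) * toFun s + (b : ℝ≥0∞) * toFun t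
  leftContinuous' : ∀ t : ℝ≥0, Filter.Tendsto toFun (nhdsWithin t (Set.Iio t)) (nhds (toFun t))
  not_zero' : ∃ t : ℝ≥0, 0 < t ∧ toFun t ≠ 0
  not_top' : ∃ t : ℝ≥0, 0 < t ∧ toFun t ≠ ⊤

instance : CoeFun YoungFunction fun _ => ℝ≥0 → ℝ≥0∞ := ⟨YoungFunction.toFun⟩

/-- A Young function is non-degenerate if `A t > 0` for all `t > 0`. -/
def YoungFunction.NonDegenerate (A : YoungFunction) : Prop :=
  ∀ t : ℝ≥0, 0 < t → A.toFun t ≠ 0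

/-- The `Δ₂`-condition near zero. -/
def Delta2NearZero (A : ℝ≥0 → ℝ≥0∞) : Prop :=
  ∃ c : ℝ≥0, 1 ≤ c ∧ ∃ t₂ : ℝ≥0, 0 < t₂ ∧ ∀ t : ℝ≥0, t ≤ t₂ → A (2 * t) ≤ (c : ℝ≥0∞) * A t

/-- Canonical extension of a function on `[0,∞)` to `[0,∞]`, sending `∞` to `∞`. -/
def extYF (A : ℝ≥0 → ℝ≥0∞) (t : ℝ≥0∞) : ℝ≥0∞ :=
  if t = ⊤ then ⊤ else A t.toNNReal

/-- The generalized right-continuous inverse `A⁻¹(t) = inf {s ≥ 0 : A s > t}`. -/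
def rcInv (A : ℝ≥0 → ℝ≥0∞) (t : ℝ≥0∞) : ℝ≥0∞ :=
  sInf {s : ℝ≥0∞ | ∃ r : ℝ≥0, s = (r : ℝ≥0∞) ∧ t < A r}

/-- Canonical upper extension of a monotone function `E : [0,∞) → [0,∞)` to `[0,∞]`. -/
def extE (E : ℝ≥0 → ℝ≥0) (t : ℝ≥0∞) : ℝ≥0∞ :=
  ⨆ (s : ℝ≥0) (_ : (s : ℝ≥0∞) ≤ t), (E s : ℝ≥0∞)

/-- The modular `∫ A(|u|/λ) dμ` associated with a Young function. -/
def modular {α : Type*} [MeasurableSpace α] (A : ℝ≥0 → ℝ≥0∞) (μ : Measure α)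
    (lam : ℝ≥0) (u : α → ℝ) : ℝ≥0∞ :=
  ∫⁻ x, A (‖u x‖₊ / lam) ∂μ

/-- Membership in the Orlicz space `L^A(μ)`. -/
def MemLA {α : Type*} [MeasurableSpace α] (A : ℝ≥0 → ℝ≥0∞) (μ : Measure α) (u : α → ℝ) : Prop :=
  AEMeasurable u μ ∧ ∃ lam : ℝ≥0, 0 < lam ∧ modular A μ lam u < ⊤

/-- Membership in the Orlicz heart `E^A(μ)`. -/
def MemEA {α : Type*} [MeasurableSpace α] (A : ℝ≥0 → ℝ≥0∞) (μ : Measure α) (u : α → ℝ) : Prop :=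
  AEMeasurable u μ ∧ ∀ lam : ℝ≥0, 0 < lam → modular A μ lam u < ⊤

/-- The Luxemburg norm. -/
def luxNorm {α : Type*} [MeasurableSpace α] (A : ℝ≥0 → ℝ≥0∞) (μ : Measure α) (u : α → ℝ) : ℝ≥0∞ :=
  sInf {l : ℝ≥0∞ | ∃ lam : ℝ≥0, 0 < lam ∧ l = (lam : ℝ≥0∞) ∧ modular A μ lam u ≤ 1}

/-- The `L^∞` norm (essential supremum of the absolute value). -/
def linftyN {α : Type*} [MeasurableSpace α] (μ : Measure α) (u : α → ℝ) : ℝ≥0∞ :=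
  essSup (fun x => (‖u x‖₊ : ℝ≥0∞)) μ

/-- `V` is the weak gradient of `u` on the open set `Ω ⊆ ℝⁿ`. -/
def IsWeakGradOn {n : ℕ} (Ω : Set (En n)) (u : En n → ℝ) (V : En n → En n) : Prop :=
  LocallyIntegrableOn u Ω volume ∧ LocallyIntegrableOn (fun x => ‖V x‖) Ω volume ∧
  ∀ φ : En n → ℝ, ContDiff ℝ (⊤ : ℕ∞) φ → HasCompactSupport φ → tsupport φ ⊆ Ω →
    ∀ y : En n, (∫ x in Ω, u x * (fderiv ℝ φ x y)) = - ∫ x in Ω, (inner ℝ (V x) y : ℝ) * φ x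

/-- Membership in the Orlicz–Sobolev space `W^{1,A}(Ω)`, with weak gradient `V`. -/
def MemW1A {n : ℕ} (A : ℝ≥0 → ℝ≥0∞) (Ω : Set (En n)) (u : En n → ℝ) (V : En n → En n) : Prop :=
  IsWeakGradOn Ω u V ∧ MemLA A (volume.restrict Ω) u ∧
    MemLA A (volume.restrict Ω) (fun x => ‖V x‖)

/-- The norm of `W^{1,A}(Ω)`. -/
def normW1A {n : ℕ} (A : ℝ≥0 → ℝ≥0∞) (Ω : Set (En n)) (u : En n → ℝ) (V : En n → En n) : ℝ≥0∞ :=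
  luxNorm A (volume.restrict Ω) u + luxNorm A (volume.restrict Ω) (fun x => ‖V x‖)

/-- Extension of `u` by `0` outside `Ω`. -/
def hatFn {n : ℕ} (Ω : Set (En n)) (u : En n → ℝ) : En n → ℝ := Ω.indicator u

/-- Membership in the homogeneous Orlicz–Sobolev space `V₀^{1,A}(Ω)`, with weak gradient `V`
of the extension by zero. -/
def MemV01 {n : ℕ} (A : ℝ≥0 → ℝ≥0∞) (Ω : Set (En n)) (u : En n → ℝ) (V : En n → En n) : Prop :=
  IsWeakGradOn (Set.univ) (hatFn Ω u) V ∧ MemLA A volume (fun x => ‖V x‖) ∧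
  ∀ t : ℝ, 0 < t → volume {x : En n | t < |hatFn Ω u x|} < ⊤

/-- Modular convergence in `W^{1,A}(Ω)` with constant `lam`. -/
def ModConvW1 {n : ℕ} (A : ℝ≥0 → ℝ≥0∞) (Ω : Set (En n)) (lam : ℝ≥0)
    (u : ℕ → En n → ℝ) (V : ℕ → En n → En n) (u₀ : En n → ℝ) (V₀ : En n → En n) : Prop :=
  Tendsto (fun k => modular A (volume.restrict Ω) lam (fun x => u k x - u₀ x)) atTop (𝓝 0) ∧
  Tendsto (fun k => modular A (volume.restrict Ω) lam (fun x => ‖V k x - V₀ x‖)) atTop (𝓝 0)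

/-- Modular convergence of gradients in `V₀^{1,A}(Ω)` with constant `lam`. -/
def ModConvV0 {n : ℕ} (A : ℝ≥0 → ℝ≥0∞) (lam : ℝ≥0)
    (V : ℕ → En n → En n) (V₀ : En n → En n) : Prop :=
  Tendsto (fun k => modular A volume lam (fun x => ‖V k x - V₀ x‖)) atTop (𝓝 0)

/-- `T_f` maps `W^{1,A}(Ω)` into `W^{1,B}(Ω)` and is continuous in the modular topology. -/
def MapsModCont {n : ℕ} (A B : ℝ≥0 → ℝ≥0∞) (Ω : Set (En n)) (f : ℝ → ℝ) : Prop :=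
  (∀ u V, MemW1A A Ω u V → ∃ W, MemW1A B Ω (fun x => f (u x)) W) ∧
  ∀ (u : ℕ → En n → ℝ) (V : ℕ → En n → En n) (u₀ : En n → ℝ) (V₀ : En n → En n),
    (∀ k, MemW1A A Ω (u k) (V k)) → MemW1A A Ω u₀ V₀ →
    (∃ lam : ℝ≥0, 0 < lam ∧ ModConvW1 A Ω lam u V u₀ V₀) →
    ∃ (W : ℕ → En n → En n) (W₀ : En n → En n),
      (∀ k, MemW1A B Ω (fun x => f (u k x)) (W k)) ∧
      MemW1A B Ω (fun x => f (u₀ x)) W₀ ∧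
      ∃ lam : ℝ≥0, 0 < lam ∧
        ModConvW1 B Ω lam (fun k x => f (u k x)) W (fun x => f (u₀ x)) W₀

/-- `T_f` maps `V₀^{1,A}(Ω)` into `V₀^{1,B}(Ω)` and is continuous in the modular topology. -/
def MapsModContV0 {n : ℕ} (A B : ℝ≥0 → ℝ≥0∞) (Ω : Set (En n)) (f : ℝ → ℝ) : Prop :=
  (∀ u V, MemV01 A Ω u V → ∃ W, MemV01 B Ω (fun x => f (u x)) W) ∧
  ∀ (u : ℕ → En n → ℝ) (V : ℕ → En n → En n) (u₀ : En n → ℝ) (V₀ : En n → En n),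
    (∀ k, MemV01 A Ω (u k) (V k)) → MemV01 A Ω u₀ V₀ →
    (∃ lam : ℝ≥0, 0 < lam ∧ ModConvV0 A lam V V₀) →
    ∃ (W : ℕ → En n → En n) (W₀ : En n → En n),
      (∀ k, MemV01 B Ω (fun x => f (u k x)) (W k)) ∧
      MemV01 B Ω (fun x => f (u₀ x)) W₀ ∧
      ∃ lam : ℝ≥0, 0 < lam ∧ ModConvV0 B lam W W₀

/-- The integrand `(t/A(t))^{1/(σ-1)}` of the Sobolev-conjugate construction. -/
def integrandA (A : ℝ≥0 → ℝ≥0∞) (σ : ℝ) (t : ℝ) : ℝ≥0∞ :=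
  (ENNReal.ofReal t / A t.toNNReal) ^ ((1 : ℝ) / (σ - 1))

/-- Convergence of `∫^∞ (t/A(t))^{1/(σ-1)} dt` near infinity. -/
def ConvAtTop (A : ℝ≥0 → ℝ≥0∞) (σ : ℝ) : Prop :=
  ∃ c : ℝ, 0 < c ∧ ∫⁻ t in Set.Ioi c, integrandA A σ t < ⊤

/-- Divergence of `∫^∞ (t/A(t))^{1/(σ-1)} dt` near infinity. -/
def DivAtTop (A : ℝ≥0 → ℝ≥0∞) (σ : ℝ) : Prop :=
  ∀ c : ℝ, 0 < c → ∫⁻ t in Set.Ioi c, integrandA A σ t = ⊤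

/-- Convergence of `∫_0 (t/A(t))^{1/(σ-1)} dt` near zero. -/
def ConvAtZero (A : ℝ≥0 → ℝ≥0∞) (σ : ℝ) : Prop :=
  ∃ c : ℝ, 0 < c ∧ ∫⁻ t in Set.Ioo 0 c, integrandA A σ t < ⊤

/-- The function `H_σ(s) = (∫_0^s (t/A(t))^{1/(σ-1)} dt)^{1/σ'}`. -/
def Hn (A : ℝ≥0 → ℝ≥0∞) (σ : ℝ) (s : ℝ) : ℝ :=
  ((∫⁻ t in Set.Ioo 0 s, integrandA A σ t) ^ ((σ - 1) / σ)).toReal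

open scoped Classical in
/-- The Sobolev conjugate `A_σ(t) = A(H_σ⁻¹(t))`, with value `∞` when `t` exceeds `sup H_σ`. -/
def SobConj (A : ℝ≥0 → ℝ≥0∞) (σ : ℝ) (t : ℝ≥0) : ℝ≥0∞ :=
  if ({s : ℝ | 0 ≤ s ∧ (t : ℝ) ≤ Hn A σ s}).Nonempty then
    A (Real.toNNReal (sInf {s : ℝ | 0 ≤ s ∧ (t : ℝ) ≤ Hn A σ s}))
  else ⊤

/-- Equivalence of Young functions near infinity. -/
def EquivNearInfty (A B : ℝ≥0 → ℝ≥0∞) : Prop :=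
  ∃ c : ℝ≥0, 0 < c ∧ ∃ t₀ : ℝ≥0, 0 < t₀ ∧ ∀ t : ℝ≥0, t₀ ≤ t →
    B (t / c) ≤ A t ∧ A t ≤ B (c * t)

/-- The divergence of a smooth vector field on `ℝⁿ`. -/
def divergence {n : ℕ} (φ : En n → En n) (x : En n) : ℝ :=
  ∑ i, fderiv ℝ φ x (EuclideanSpace.single i (1 : ℝ)) i

/-- The perimeter of `G` relative to `Ω`, defined by duality with smooth vector fields. -/
def relPerimeter {n : ℕ} (G Ω : Set (En n)) : ℝ≥0∞ :=
  ⨆ (φ : En n → En n) (_ : ContDiff ℝ (⊤ : ℕ∞) φ ∧ HasCompactSupport φ ∧ tsupport φ ⊆ Ω ∧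
      ∀ x, ‖φ x‖ ≤ 1), ENNReal.ofReal (∫ x in G, divergence φ x)

/-- The class `𝒢_{1/σ'}` of open sets of finite measure supporting a relative isoperimetric
inequality with exponent `1/σ' = (σ-1)/σ`. -/
def MemGClass {n : ℕ} (Ω : Set (En n)) (σ : ℝ) : Prop :=
  IsOpen Ω ∧ volume Ω < ⊤ ∧ ∃ c : ℝ≥0, 0 < c ∧
    ∀ G : Set (En n), G ⊆ Ω → MeasurableSet G →
      (c : ℝ≥0∞) * (min (volume G) (volume (Ω \ G))) ^ ((σ - 1) / σ) ≤ relPerimeter G Ω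

/-- The `W^{1,1}` norm of a pair (function, gradient) on `Ω`. -/
def normW11 {n : ℕ} (Ω : Set (En n)) (u : En n → ℝ) (V : En n → En n) : ℝ≥0∞ :=
  (∫⁻ x in Ω, (‖u x‖₊ : ℝ≥0∞)) + ∫⁻ x in Ω, (‖V x‖₊ : ℝ≥0∞)

/-- The `W^{1,∞}` norm of a pair (function, gradient) on `Ω`. -/
def normW1inf {n : ℕ} (Ω : Set (En n)) (u : En n → ℝ) (V : En n → En n) : ℝ≥0∞ :=
  essSup (fun x => (‖u x‖₊ : ℝ≥0∞)) (volume.restrict Ω) +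
    essSup (fun x => (‖V x‖₊ : ℝ≥0∞)) (volume.restrict Ω)

/-- `Ω` is an extension domain: there is a linear extension operator bounded from
`W^{1,1}(Ω)` to `W^{1,1}(ℝⁿ)` and from `W^{1,∞}(Ω)` to `W^{1,∞}(ℝⁿ)`. -/
def IsExtensionDomain {n : ℕ} (Ω : Set (En n)) : Prop :=
  IsOpen Ω ∧ ∃ Ext : (En n → ℝ) →ₗ[ℝ] (En n → ℝ),
    (∀ u : En n → ℝ, Set.EqOn (Ext u) u Ω) ∧
    ∃ C : ℝ≥0∞,
      (∀ u V, IsWeakGradOn Ω u V → normW11 Ω u V < ⊤ →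
        ∃ W, IsWeakGradOn (Set.univ) (Ext u) W ∧
          normW11 (Set.univ) (Ext u) W ≤ C * normW11 Ω u V) ∧
      (∀ u V, IsWeakGradOn Ω u V → normW1inf Ω u V < ⊤ →
        ∃ W, IsWeakGradOn (Set.univ) (Ext u) W ∧
          normW1inf (Set.univ) (Ext u) W ≤ C * normW1inf Ω u V)

/-- The a.e. derivative bound `|f'(t)| ≤ κ E(κ|t|)`. -/
def DerivBound (f : ℝ → ℝ) (κ : ℝ≥0) (E : ℝ≥0 → ℝ≥0) : Prop :=
  ∀ᵐ t : ℝ, ∀ d : ℝ, HasDerivAt f d t →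
    |d| ≤ ((κ * E (κ * Real.toNNReal |t|) : ℝ≥0) : ℝ)

/-- An `n`-dimensional Young function: convex, even, lower semicontinuous,
finite near `0`, vanishing at `0` and tending to `∞` at infinity. -/
structure YoungFunctionN (n : ℕ) : Type where
  toFun : En n → ℝ≥0∞
  map_zero' : toFun 0 = 0
  convex' : ∀ ξ η : En n, ∀ a b : ℝ, 0 ≤ a → 0 ≤ b → a + b = 1 →
    toFun (a • ξ + b • η) ≤ ENNReal.ofReal a * toFun ξ + ENNReal.ofReal b * toFun η
  even' : ∀ ξ : En n, toFun (-ξ) = toFun ξ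
  lsc' : LowerSemicontinuous toFun
  finite_near_zero' : ∃ ε : ℝ, 0 < ε ∧ ∀ ξ : En n, ‖ξ‖ < ε → toFun ξ < ⊤
  tendsto_top' : Tendsto toFun (Bornology.cobounded (En n)) (𝓝 ⊤)

instance {n : ℕ} : CoeFun (YoungFunctionN n) fun _ => En n → ℝ≥0∞ := ⟨YoungFunctionN.toFun⟩

/-- A non-degenerate `n`-dimensional Young function. -/
def YoungFunctionN.NonDegenerate {n : ℕ} (Φ : YoungFunctionN n) : Prop :=
  ∀ ξ : En n, ξ ≠ 0 → Φ.toFun ξ ≠ 0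

/-- The vector-valued modular `∫ Φ(U/λ) dμ`. -/
def modularV {n : ℕ} (Φ : YoungFunctionN n) (μ : Measure (En n)) (lam : ℝ≥0)
    (U : En n → En n) : ℝ≥0∞ :=
  ∫⁻ x, Φ.toFun (((lam : ℝ))⁻¹ • U x) ∂μ

/-- Membership in the anisotropic homogeneous Orlicz–Sobolev space `V₀^{1,Φ}(Ω)`. -/
def MemV01Phi {n : ℕ} (Φ : YoungFunctionN n) (Ω : Set (En n)) (u : En n → ℝ)
    (V : En n → En n) : Prop :=
  IsWeakGradOn (Set.univ) (hatFn Ω u) V ∧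
  (AEMeasurable V volume ∧ ∃ lam : ℝ≥0, 0 < lam ∧ modularV Φ volume lam V < ⊤) ∧
  ∀ t : ℝ, 0 < t → volume {x : En n | t < |hatFn Ω u x|} < ⊤

/-- Modular convergence of gradients in `V₀^{1,Φ}(Ω)` with constant `lam`. -/
def ModConvV0Phi {n : ℕ} (Φ : YoungFunctionN n) (lam : ℝ≥0)
    (V : ℕ → En n → En n) (V₀ : En n → En n) : Prop :=
  Tendsto (fun k => modularV Φ volume lam (fun x => V k x - V₀ x)) atTop (𝓝 0)

/-- `T_f` maps `V₀^{1,Φ}(Ω)` into `V₀^{1,Ψ}(Ω)` and is continuous in the modular topology. -/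
def MapsModContV0Phi {n : ℕ} (Φ Ψ : YoungFunctionN n) (Ω : Set (En n)) (f : ℝ → ℝ) : Prop :=
  (∀ u V, MemV01Phi Φ Ω u V → ∃ W, MemV01Phi Ψ Ω (fun x => f (u x)) W) ∧
  ∀ (u : ℕ → En n → ℝ) (V : ℕ → En n → En n) (u₀ : En n → ℝ) (V₀ : En n → En n),
    (∀ k, MemV01Phi Φ Ω (u k) (V k)) → MemV01Phi Φ Ω u₀ V₀ →
    (∃ lam : ℝ≥0, 0 < lam ∧ ModConvV0Phi Φ lam V V₀) →
    ∃ (W : ℕ → En n → En n) (W₀ : En n → En n),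
      (∀ k, MemV01Phi Ψ Ω (fun x => f (u k x)) (W k)) ∧
      MemV01Phi Ψ Ω (fun x => f (u₀ x)) W₀ ∧
      ∃ lam : ℝ≥0, 0 < lam ∧ ModConvV0Phi Ψ lam W W₀

/-- `Φo` is the radial "average in measure" `Φ_∘` of the `n`-dimensional Young function `Φ`. -/
def IsCircAvg {n : ℕ} (Φ : YoungFunctionN n) (Φo : ℝ≥0 → ℝ≥0∞) : Prop :=
  ∀ t : ℝ≥0∞, volume {ξ : En n | Φo ‖ξ‖₊ ≤ t} = volume {ξ : En n | Φ.toFun ξ ≤ t}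

/-! ### One-dimensional versions -/

/-- `V` is the weak derivative of `u` on the open set `Ω ⊆ ℝ`. -/
def IsWeakDerivOn (Ω : Set ℝ) (u V : ℝ → ℝ) : Prop :=
  LocallyIntegrableOn u Ω volume ∧ LocallyIntegrableOn V Ω volume ∧
  ∀ φ : ℝ → ℝ, ContDiff ℝ (⊤ : ℕ∞) φ → HasCompactSupport φ → tsupport φ ⊆ Ω →
    (∫ x in Ω, u x * deriv φ x) = - ∫ x in Ω, V x * φ x

/-- Membership in `W^{1,A}(Ω)` for `Ω ⊆ ℝ`. -/
def MemW1A1 (A : ℝ≥0 → ℝ≥0∞) (Ω : Set ℝ) (u V : ℝ → ℝ) : Prop :=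
  IsWeakDerivOn Ω u V ∧ MemLA A (volume.restrict Ω) u ∧ MemLA A (volume.restrict Ω) V

/-- Extension by zero, one-dimensional case. -/
def hatFn1 (Ω : Set ℝ) (u : ℝ → ℝ) : ℝ → ℝ := Ω.indicator u

/-- Membership in `V₀^{1,A}(Ω)` for `Ω ⊆ ℝ`. -/
def MemV011 (A : ℝ≥0 → ℝ≥0∞) (Ω : Set ℝ) (u V : ℝ → ℝ) : Prop :=
  IsWeakDerivOn (Set.univ) (hatFn1 Ω u) V ∧ MemLA A volume V ∧
  ∀ t : ℝ, 0 < t → volume {x : ℝ | t < |hatFn1 Ω u x|} < ⊤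

/-- Modular convergence in `W^{1,A}(Ω)`, `Ω ⊆ ℝ`, with constant `lam`. -/
def ModConvW1R (A : ℝ≥0 → ℝ≥0∞) (Ω : Set ℝ) (lam : ℝ≥0)
    (u V : ℕ → ℝ → ℝ) (u₀ V₀ : ℝ → ℝ) : Prop :=
  Tendsto (fun k => modular A (volume.restrict Ω) lam (fun x => u k x - u₀ x)) atTop (𝓝 0) ∧
  Tendsto (fun k => modular A (volume.restrict Ω) lam (fun x => V k x - V₀ x)) atTop (𝓝 0)

/-- Modular convergence of derivatives in `V₀^{1,A}(Ω)`, `Ω ⊆ ℝ`, with constant `lam`. -/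
def ModConvV0R (A : ℝ≥0 → ℝ≥0∞) (lam : ℝ≥0) (V : ℕ → ℝ → ℝ) (V₀ : ℝ → ℝ) : Prop :=
  Tendsto (fun k => modular A volume lam (fun x => V k x - V₀ x)) atTop (𝓝 0)

/-- `T_f` maps `W^{1,A}(Ω)` into `W^{1,B}(Ω)` continuously in the modular topology, `Ω ⊆ ℝ`. -/
def MapsModContR (A B : ℝ≥0 → ℝ≥0∞) (Ω : Set ℝ) (f : ℝ → ℝ) : Prop :=
  (∀ u V, MemW1A1 A Ω u V → ∃ W, MemW1A1 B Ω (fun x => f (u x)) W) ∧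
  ∀ (u V : ℕ → ℝ → ℝ) (u₀ V₀ : ℝ → ℝ),
    (∀ k, MemW1A1 A Ω (u k) (V k)) → MemW1A1 A Ω u₀ V₀ →
    (∃ lam : ℝ≥0, 0 < lam ∧ ModConvW1R A Ω lam u V u₀ V₀) →
    ∃ (W : ℕ → ℝ → ℝ) (W₀ : ℝ → ℝ),
      (∀ k, MemW1A1 B Ω (fun x => f (u k x)) (W k)) ∧
      MemW1A1 B Ω (fun x => f (u₀ x)) W₀ ∧
      ∃ lam : ℝ≥0, 0 < lam ∧
        ModConvW1R B Ω lam (fun k x => f (u k x)) W (fun x => f (u₀ x)) W₀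

/-- `T_f` maps `V₀^{1,A}(Ω)` into `V₀^{1,B}(Ω)` continuously in the modular topology, `Ω ⊆ ℝ`. -/
def MapsModContV0R (A B : ℝ≥0 → ℝ≥0∞) (Ω : Set ℝ) (f : ℝ → ℝ) : Prop :=
  (∀ u V, MemV011 A Ω u V → ∃ W, MemV011 B Ω (fun x => f (u x)) W) ∧
  ∀ (u V : ℕ → ℝ → ℝ) (u₀ V₀ : ℝ → ℝ),
    (∀ k, MemV011 A Ω (u k) (V k)) → MemV011 A Ω u₀ V₀ →
    (∃ lam : ℝ≥0, 0 < lam ∧ ModConvV0R A lam V V₀) →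
    ∃ (W : ℕ → ℝ → ℝ) (W₀ : ℝ → ℝ),
      (∀ k, MemV011 B Ω (fun x => f (u k x)) (W k)) ∧
      MemV011 B Ω (fun x => f (u₀ x)) W₀ ∧
      ∃ lam : ℝ≥0, 0 < lam ∧ ModConvV0R B lam W W₀


/-! ### Auxiliary lemmas for Statement 16 -/

section Aux16

lemma yf_mono (A : YoungFunction) : Monotone A.toFun := by
  intro s t hst
  rcases eq_zero_or_pos t with rfl | ht
  · obtain rfl := le_antisymm hst (zero_le : (0 : ℝ≥0) ≤ s); exact le_rfl
  · have h1 : s / t ≤ 1 := by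
      rw [div_le_one ht]; exact hst
    have hab : s / t + (1 - s / t) = 1 := add_tsub_cancel_of_le h1
    have hkey := A.convex' t 0 (s / t) (1 - s / t) hab
    rw [mul_zero, add_zero, div_mul_cancel₀ _ ht.ne', A.map_zero', mul_zero, add_zero] at hkey
    calc A.toFun s ≤ ((s / t : ℝ≥0) : ℝ≥0∞) * A.toFun t := hkey
      _ ≤ 1 * A.toFun t := mul_le_mul_left (by exact_mod_cast h1) _
      _ = A.toFun t := one_mul _

lemma yf_scale (A : YoungFunction) {a : ℝ≥0} (ha : a ≤ 1) (t : ℝ≥0) :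
    A.toFun (a * t) ≤ (a : ℝ≥0∞) * A.toFun t := by
  have hab : a + (1 - a) = 1 := add_tsub_cancel_of_le ha
  have hkey := A.convex' t 0 a (1 - a) hab
  rwa [mul_zero, add_zero, A.map_zero', mul_zero, add_zero] at hkey

lemma yf_cont (A : YoungFunction) (hAfin : ∀ t : ℝ≥0, A.toFun t ≠ ⊤) :
    Continuous A.toFun := by
  rw [continuous_iff_continuousAt]
  intro t
  unfold ContinuousAt
  rw [← nhdsLT_sup_nhdsGE t, tendsto_sup]
  refine ⟨A.leftContinuous' t, ?_⟩
  have h1 : 𝓝[≥] t = pure t ⊔ 𝓝[>] t := by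
    rw [← Set.Ioi_insert, nhdsWithin_insert]
  rw [h1, tendsto_sup]
  refine ⟨tendsto_pure_nhds _ _, ?_⟩
  have hupper : ∀ᶠ s in 𝓝[>] t,
      A.toFun s ≤ A.toFun t + ((s - t : ℝ≥0) : ℝ≥0∞) * A.toFun (t + 1) := by
    filter_upwards [Ioc_mem_nhdsGT_of_mem
      (⟨le_rfl, lt_add_one t⟩ : t ∈ Set.Ico t (t + 1))] with s hs
    have hts : t ≤ s := hs.1.le
    have hθ1 : s - t ≤ 1 := tsub_le_iff_right.2 (by rw [add_comm]; exact hs.2)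
    have hab : (1 - (s - t)) + (s - t) = 1 := tsub_add_cancel_of_le hθ1
    have hkey := A.convex' t (t + 1) (1 - (s - t)) (s - t) hab
    have harg : (1 - (s - t)) * t + (s - t) * (t + 1) = s := by
      have h2 : (1 - (s - t)) * t + (s - t) * (t + 1)
          = ((1 - (s - t)) + (s - t)) * t + (s - t) := by ring
      rw [h2, hab, one_mul, add_tsub_cancel_of_le hts]
    rw [harg] at hkey
    calc A.toFun s
        ≤ ((1 - (s - t) : ℝ≥0) : ℝ≥0∞) * A.toFun t
            + ((s - t : ℝ≥0) : ℝ≥0∞) * A.toFun (t + 1) := hkey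
      _ ≤ 1 * A.toFun t + ((s - t : ℝ≥0) : ℝ≥0∞) * A.toFun (t + 1) := by
            refine add_le_add_left (mul_le_mul_left ?_ _) _
            exact_mod_cast tsub_le_self
      _ = A.toFun t + ((s - t : ℝ≥0) : ℝ≥0∞) * A.toFun (t + 1) := by rw [one_mul]
  have hlower : ∀ᶠ s in 𝓝[>] t, A.toFun t ≤ A.toFun s := by
    filter_upwards [self_mem_nhdsWithin] with s hs
    exact yf_mono A (le_of_lt hs)
  have htend : Tendsto (fun s : ℝ≥0 => A.toFun t + ((s - t : ℝ≥0) : ℝ≥0∞) * A.toFun (t + 1))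
      (𝓝[>] t) (𝓝 (A.toFun t)) := by
    have h2 : Tendsto (fun s : ℝ≥0 => ((s - t : ℝ≥0) : ℝ≥0∞)) (𝓝[>] t) (𝓝 0) := by
      have h3 : Tendsto (fun s : ℝ≥0 => s - t) (𝓝 t) (𝓝 (t - t)) :=
        (continuous_id.sub continuous_const).tendsto t
      rw [tsub_self] at h3
      exact (ENNReal.tendsto_coe.2 h3).mono_left nhdsWithin_le_nhds
    have h3 := ENNReal.Tendsto.mul_const h2 (Or.inr (hAfin (t + 1)))
    rw [zero_mul] at h3
    have h4 := Tendsto.const_add (A.toFun t) h3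
    rwa [add_zero] at h4
  exact tendsto_of_tendsto_of_tendsto_of_le_of_le' tendsto_const_nhds htend hlower hupper

lemma yf_tendsto_zero (A : YoungFunction) (hA : A.NonDegenerate) {t : ℕ → ℝ≥0}
    (h : Tendsto (fun j => A.toFun (t j)) atTop (𝓝 0)) : Tendsto t atTop (𝓝 0) := by
  rw [tendsto_order]
  constructor
  · exact fun a ha => absurd ha (not_lt.2 (zero_le : (0 : ℝ≥0) ≤ a))
  · intro a ha
    have hA0 : (0 : ℝ≥0∞) < A.toFun a := pos_iff_ne_zero.2 (hA a ha)
    filter_upwards [h.eventually_lt_const hA0] with j hj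
    by_contra hc
    exact absurd (yf_mono A (not_lt.1 hc)) (not_le.2 hj)

lemma ae_tendsto_zero_of_tsum_ne_top {α : Type*} [MeasurableSpace α] {μ : Measure α}
    {f : ℕ → α → ℝ≥0∞} (hf : ∀ m, AEMeasurable (f m) μ)
    (h : ∑' m, ∫⁻ x, f m x ∂μ ≠ ⊤) :
    ∀ᵐ x ∂μ, Tendsto (fun m => f m x) atTop (𝓝 0) := by
  rw [← lintegral_tsum hf] at h
  filter_upwards [ae_lt_top' (AEMeasurable.ennreal_tsum hf) h] with x hx
  exact ENNReal.tendsto_atTop_zero_of_tsum_ne_top hx.ne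

lemma limsup_le_of_tendsto_add {x d : ℕ → ℝ≥0∞} {B L : ℝ≥0∞} (hB : B ≠ ⊤) (hLB : L ≤ B)
    (hsum : Tendsto (fun j => x j + d j) atTop (𝓝 B))
    (hlow : B - L ≤ Filter.liminf d atTop) :
    Filter.limsup x atTop ≤ L := by
  refine ENNReal.le_of_forall_pos_le_add fun ε hε _ => ?_
  have hε'pos : (0 : ℝ≥0) < ε / 2 := half_pos hε
  have hεsplit : ((ε / 2 : ℝ≥0) : ℝ≥0∞) + ((ε / 2 : ℝ≥0) : ℝ≥0∞) = (ε : ℝ≥0∞) := by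
    rw [← ENNReal.coe_add, add_halves]
  have hBlt : B < B + (ε / 2 : ℝ≥0) :=
    ENNReal.lt_add_right hB (by exact_mod_cast hε'pos.ne')
  have ev1 : ∀ᶠ j in atTop, x j + d j < B + (ε / 2 : ℝ≥0) := hsum.eventually_lt_const hBlt
  rcases le_or_gt (B - L) ((ε / 2 : ℝ≥0) : ℝ≥0∞) with hc | hc
  · refine Filter.limsup_le_of_le (by isBoundedDefault) ?_
    filter_upwards [ev1] with j hj
    have hBL : B ≤ L + (ε / 2 : ℝ≥0) := by
      calc B = L + (B - L) := (add_tsub_cancel_of_le hLB).symm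
        _ ≤ L + (ε / 2 : ℝ≥0) := add_le_add_right hc _
    calc x j ≤ B + (ε / 2 : ℝ≥0) := le_of_lt (lt_of_le_of_lt le_self_add hj)
      _ ≤ L + (ε / 2 : ℝ≥0) + (ε / 2 : ℝ≥0) := add_le_add_left hBL _
      _ = L + ε := by rw [add_assoc, hεsplit]
  · have hDne : B - L ≠ ⊤ := (lt_of_le_of_lt tsub_le_self hB.lt_top).ne
    have hDpos : B - L ≠ 0 := (lt_of_le_of_lt zero_le hc).ne'
    have hstep : B - L - (ε / 2 : ℝ≥0) < Filter.liminf d atTop :=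
      lt_of_lt_of_le (ENNReal.sub_lt_self hDne hDpos (by exact_mod_cast hε'pos.ne')) hlow
    have ev2 : ∀ᶠ j in atTop, B - L - (ε / 2 : ℝ≥0) < d j := eventually_lt_of_lt_liminf hstep
    refine Filter.limsup_le_of_le (by isBoundedDefault) ?_
    filter_upwards [ev1, ev2] with j h1 h2
    have hfin : B - L - (ε / 2 : ℝ≥0) ≠ ⊤ := (lt_of_le_of_lt tsub_le_self hDne.lt_top).ne
    have e1 : B + (ε / 2 : ℝ≥0) = (L + ε) + (B - L - (ε / 2 : ℝ≥0)) := by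
      have e2 : (B - L - (ε / 2 : ℝ≥0)) + (ε / 2 : ℝ≥0) = B - L := tsub_add_cancel_of_le hc.le
      calc B + (ε / 2 : ℝ≥0) = L + (B - L) + (ε / 2 : ℝ≥0) := by
            rw [add_tsub_cancel_of_le hLB]
        _ = L + ((B - L - (ε / 2 : ℝ≥0)) + (ε / 2 : ℝ≥0)) + (ε / 2 : ℝ≥0) := by rw [e2]
        _ = L + ((ε / 2 : ℝ≥0) + (ε / 2 : ℝ≥0)) + (B - L - (ε / 2 : ℝ≥0)) := by ring
        _ = (L + ε) + (B - L - (ε / 2 : ℝ≥0)) := by rw [hεsplit]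
    have hkey : x j + (B - L - (ε / 2 : ℝ≥0)) ≤ (L + ε) + (B - L - (ε / 2 : ℝ≥0)) := by
      calc x j + (B - L - (ε / 2 : ℝ≥0)) ≤ x j + d j := add_le_add_right h2.le _
        _ ≤ B + (ε / 2 : ℝ≥0) := h1.le
        _ = (L + ε) + (B - L - (ε / 2 : ℝ≥0)) := e1
    exact (ENNReal.add_le_add_iff_right hfin).1 hkey

lemma nn_div_le_div {t c c' : ℝ≥0} (hc : 0 < c) (h : c ≤ c') : t / c' ≤ t / c := by
  rw [div_eq_mul_inv, div_eq_mul_inv]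
  exact mul_le_mul_right (inv_anti₀ hc h) t

lemma modular_key {α : Type*} [MeasurableSpace α] {μ : Measure α}
    (A : YoungFunction) (hA : A.NonDegenerate) (hAfin : ∀ t : ℝ≥0, A.toFun t ≠ ⊤)
    (u : ℕ → α → ℝ) (u₀ : α → ℝ) (lam₀ lam₁ : ℝ≥0) (h₀ : 0 < lam₀) (h₁ : 0 < lam₁)
    (hu : ∀ k, AEMeasurable (u k) μ) (hu₀ : AEMeasurable u₀ μ)
    (hconv : Tendsto (fun k => modular (⇑A) μ lam₀ (fun x => u k x - u₀ x)) atTop (𝓝 0))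
    (hfin : modular (⇑A) μ lam₁ u₀ < ⊤)
    (lam : ℝ≥0) (hlam : 2 * max lam₀ lam₁ ≤ lam) :
    Tendsto (fun k => modular (⇑A) μ lam (u k)) atTop (𝓝 (modular (⇑A) μ lam u₀)) := by
  have hlam0 : (0 : ℝ≥0) < lam :=
    lt_of_lt_of_le (mul_pos two_pos (lt_max_iff.2 (Or.inl h₀))) hlam
  have hcont : Continuous A.toFun := yf_cont A hAfin
  have hinv2 : ((2 : ℝ≥0∞))⁻¹ ≠ ⊤ := ENNReal.inv_ne_top.2 two_ne_zero
  have hc2 : ((2⁻¹ : ℝ≥0) : ℝ≥0∞) = (2 : ℝ≥0∞)⁻¹ := by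
    rw [ENNReal.coe_inv two_ne_zero]; norm_num
  set g : α → ℝ≥0∞ := fun x => A.toFun (‖u₀ x‖₊ / lam₁) with hgdef
  set h : ℕ → α → ℝ≥0∞ := fun k x => A.toFun (‖u k x - u₀ x‖₊ / lam₀) with hhdef
  set a : ℕ → α → ℝ≥0∞ := fun k x => A.toFun (‖u k x‖₊ / lam) with hadef
  set a₀ : α → ℝ≥0∞ := fun x => A.toFun (‖u₀ x‖₊ / lam) with ha₀def
  have meas : ∀ (v : α → ℝ) (c : ℝ≥0), AEMeasurable v μ →
      AEMeasurable (fun x => A.toFun (‖v x‖₊ / c)) μ := by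
    intro v c hv
    have c1 : Continuous fun s : ℝ≥0 => A.toFun (s / c) := by
      simp only [div_eq_mul_inv]
      exact hcont.comp (continuous_mul_right _)
    exact c1.measurable.comp_aemeasurable hv.nnnorm
  have hconvex2 : ∀ p q : ℝ≥0,
      A.toFun (2⁻¹ * p + 2⁻¹ * q) ≤ 2⁻¹ * A.toFun p + 2⁻¹ * A.toFun q := by
    intro p q
    have h2 : (2⁻¹ : ℝ≥0) + 2⁻¹ = 1 := by
      rw [← two_mul]; exact mul_inv_cancel₀ two_ne_zero
    have hkey := A.convex' p q 2⁻¹ 2⁻¹ h2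
    rwa [hc2] at hkey
  have hl0 : 2 * lam₀ ≤ lam := le_trans (by gcongr; exact le_max_left _ _) hlam
  have hl1 : 2 * lam₁ ≤ lam := le_trans (by gcongr; exact le_max_right _ _) hlam
  have hdiv : ∀ (t c : ℝ≥0), 0 < c → 2 * c ≤ lam → t / lam ≤ 2⁻¹ * (t / c) := by
    intro t c hc hcl
    have e1 : (2⁻¹ : ℝ≥0) * (t / c) = t / (2 * c) := by
      rw [div_eq_mul_inv, div_eq_mul_inv, mul_inv]
      ring
    rw [e1]
    exact nn_div_le_div (by positivity) hcl
  have habound : ∀ k x, a k x ≤ 2⁻¹ * h k x + 2⁻¹ * g x := by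
    intro k x
    have hn : ‖u k x‖₊ ≤ ‖u k x - u₀ x‖₊ + ‖u₀ x‖₊ := by
      calc ‖u k x‖₊ = ‖(u k x - u₀ x) + u₀ x‖₊ := by rw [sub_add_cancel]
        _ ≤ _ := nnnorm_add_le _ _
    have harg : ‖u k x‖₊ / lam
        ≤ 2⁻¹ * (‖u k x - u₀ x‖₊ / lam₀) + 2⁻¹ * (‖u₀ x‖₊ / lam₁) := by
      calc ‖u k x‖₊ / lam ≤ (‖u k x - u₀ x‖₊ + ‖u₀ x‖₊) / lam := by gcongr
        _ = ‖u k x - u₀ x‖₊ / lam + ‖u₀ x‖₊ / lam := add_div _ _ _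
        _ ≤ _ := add_le_add (hdiv _ _ h₀ hl0) (hdiv _ _ h₁ hl1)
    calc a k x ≤ A.toFun (2⁻¹ * (‖u k x - u₀ x‖₊ / lam₀) + 2⁻¹ * (‖u₀ x‖₊ / lam₁)) :=
          yf_mono A harg
      _ ≤ _ := hconvex2 _ _
  have ha₀g : ∀ x, a₀ x ≤ 2⁻¹ * g x := by
    intro x
    have harg : ‖u₀ x‖₊ / lam ≤ 2⁻¹ * (‖u₀ x‖₊ / lam₁) := hdiv _ _ h₁ hl1
    calc a₀ x ≤ A.toFun (2⁻¹ * (‖u₀ x‖₊ / lam₁)) := yf_mono A harg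
      _ ≤ 2⁻¹ * g x := by
          have hs := yf_scale A (show (2⁻¹ : ℝ≥0) ≤ 1 by norm_num) (‖u₀ x‖₊ / lam₁)
          rwa [hc2] at hs
  have hg_meas : AEMeasurable g μ := meas u₀ lam₁ hu₀
  have hh_meas : ∀ k, AEMeasurable (h k) μ := fun k => meas _ lam₀ ((hu k).sub hu₀)
  have ha_meas : ∀ k, AEMeasurable (a k) μ := fun k => meas _ lam (hu k)
  have ha₀_meas : AEMeasurable a₀ μ := meas u₀ lam hu₀
  have hgint : ∫⁻ x, g x ∂μ < ⊤ := hfin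
  set L : ℝ≥0∞ := ∫⁻ x, a₀ x ∂μ with hLdef
  set B : ℝ≥0∞ := (2 : ℝ≥0∞)⁻¹ * ∫⁻ x, g x ∂μ with hBdef
  have hB : B ≠ ⊤ := ENNReal.mul_ne_top hinv2 hgint.ne
  have hLB : L ≤ B := by
    rw [hBdef, ← lintegral_const_mul' _ _ hinv2]
    exact lintegral_mono ha₀g
  have hLne : L ≠ ⊤ := (lt_of_le_of_lt hLB hB.lt_top).ne
  have hgoal : Tendsto (fun k => ∫⁻ x, a k x ∂μ) atTop (𝓝 L) := by
    refine tendsto_of_subseq_tendsto fun ns hns => ?_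
    have hconv' : Tendsto (fun j => ∫⁻ x, h (ns j) x ∂μ) atTop (𝓝 0) := hconv.comp hns
    have hev : ∀ m : ℕ, ∀ᶠ j in atTop, ∫⁻ x, h (ns j) x ∂μ ≤ (2 : ℝ≥0∞)⁻¹ ^ m := by
      intro m
      have hp : (0 : ℝ≥0∞) < 2⁻¹ ^ m :=
        ENNReal.pow_pos (ENNReal.inv_pos.2 ENNReal.ofNat_ne_top) m
      filter_upwards [hconv'.eventually_lt_const hp] with j hj
      exact hj.le
    obtain ⟨φ, hφ, hφle⟩ := Filter.extraction_forall_of_eventually hev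
    refine ⟨φ, ?_⟩
    have htsum : ∑' m, ∫⁻ x, h (ns (φ m)) x ∂μ ≠ ⊤ := by
      have hgeo : (∑' m : ℕ, (2 : ℝ≥0∞)⁻¹ ^ m) ≠ ⊤ := by
        rw [ENNReal.tsum_geometric]
        refine ENNReal.inv_ne_top.2 ?_
        rw [Ne, tsub_eq_zero_iff_le]
        exact not_le.2 (ENNReal.inv_lt_one.2 one_lt_two)
      exact ne_top_of_le_ne_top hgeo (ENNReal.tsum_le_tsum fun m => hφle m)
    have haeh : ∀ᵐ x ∂μ, Tendsto (fun m => h (ns (φ m)) x) atTop (𝓝 0) :=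
      ae_tendsto_zero_of_tsum_ne_top (fun m => hh_meas _) htsum
    have haea : ∀ᵐ x ∂μ, Tendsto (fun m => a (ns (φ m)) x) atTop (𝓝 (a₀ x)) := by
      filter_upwards [haeh] with x hx
      have h1 : Tendsto (fun m => ‖u (ns (φ m)) x - u₀ x‖₊ / lam₀) atTop (𝓝 0) :=
        yf_tendsto_zero A hA hx
      have h3 : Tendsto (fun m => ‖u (ns (φ m)) x - u₀ x‖₊) atTop (𝓝 0) := by
        have h4 := h1.mul_const lam₀
        simp only [div_mul_cancel₀ _ h₀.ne', zero_mul] at h4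
        exact h4
      have h2 : Tendsto (fun m => u (ns (φ m)) x) atTop (𝓝 (u₀ x)) := by
        rw [tendsto_iff_norm_sub_tendsto_zero]
        have h5 := NNReal.tendsto_coe.2 h3
        simpa using h5
      have hc : Continuous fun y : ℝ => A.toFun (‖y‖₊ / lam) := by
        simp only [div_eq_mul_inv]
        exact hcont.comp (continuous_nnnorm.mul continuous_const)
      exact (hc.tendsto (u₀ x)).comp h2
    have hbint : ∀ m, ∫⁻ x, (2⁻¹ * h (ns (φ m)) x + 2⁻¹ * g x) ∂μ
        = 2⁻¹ * ∫⁻ x, h (ns (φ m)) x ∂μ + B := by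
      intro m
      rw [lintegral_add_left' ((hh_meas (ns (φ m))).const_mul _),
        lintegral_const_mul' _ _ hinv2, lintegral_const_mul' _ _ hinv2]
    have hBtend : Tendsto (fun m => 2⁻¹ * ∫⁻ x, h (ns (φ m)) x ∂μ + B) atTop (𝓝 B) := by
      have h1 : Tendsto (fun m => (2 : ℝ≥0∞)⁻¹ * ∫⁻ x, h (ns (φ m)) x ∂μ) atTop (𝓝 0) := by
        have h2 := ENNReal.Tendsto.const_mul (hconv'.comp hφ.tendsto_atTop) (Or.inr hinv2)
        simpa [Function.comp] using h2
      have h3 := h1.add_const B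
      rwa [zero_add] at h3
    have hsub : ∀ m, ∫⁻ x, a (ns (φ m)) x ∂μ
        + ∫⁻ x, ((2⁻¹ * h (ns (φ m)) x + 2⁻¹ * g x) - a (ns (φ m)) x) ∂μ
        = 2⁻¹ * ∫⁻ x, h (ns (φ m)) x ∂μ + B := by
      intro m
      have e1 : ∀ x, a (ns (φ m)) x
          + ((2⁻¹ * h (ns (φ m)) x + 2⁻¹ * g x) - a (ns (φ m)) x)
          = 2⁻¹ * h (ns (φ m)) x + 2⁻¹ * g x :=
        fun x => add_tsub_cancel_of_le (habound (ns (φ m)) x)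
      calc ∫⁻ x, a (ns (φ m)) x ∂μ
          + ∫⁻ x, ((2⁻¹ * h (ns (φ m)) x + 2⁻¹ * g x) - a (ns (φ m)) x) ∂μ
          = ∫⁻ x, (a (ns (φ m)) x
              + ((2⁻¹ * h (ns (φ m)) x + 2⁻¹ * g x) - a (ns (φ m)) x)) ∂μ :=
            (lintegral_add_left' (ha_meas (ns (φ m))) _).symm
        _ = ∫⁻ x, (2⁻¹ * h (ns (φ m)) x + 2⁻¹ * g x) ∂μ := lintegral_congr e1
        _ = _ := hbint m
    have hliminf : L ≤ Filter.liminf (fun m => ∫⁻ x, a (ns (φ m)) x ∂μ) atTop := by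
      have e1 : L = ∫⁻ x, Filter.liminf (fun m => a (ns (φ m)) x) atTop ∂μ :=
        lintegral_congr_ae (haea.mono fun x hx => hx.liminf_eq.symm)
      rw [e1]
      exact lintegral_liminf_le' fun m => ha_meas (ns (φ m))
    have hcmeas : ∀ m, AEMeasurable
        (fun x => (2⁻¹ * h (ns (φ m)) x + 2⁻¹ * g x) - a (ns (φ m)) x) μ :=
      fun m => (((hh_meas (ns (φ m))).const_mul _).add (hg_meas.const_mul _)).sub
        (ha_meas (ns (φ m)))
    have haec : ∀ᵐ x ∂μ, Tendsto
        (fun m => (2⁻¹ * h (ns (φ m)) x + 2⁻¹ * g x) - a (ns (φ m)) x) atTop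
        (𝓝 (2⁻¹ * g x - a₀ x)) := by
      filter_upwards [haeh, haea, ae_lt_top' hg_meas hgint.ne] with x hx1 hx2 hx3
      have hb : Tendsto (fun m => 2⁻¹ * h (ns (φ m)) x + 2⁻¹ * g x) atTop
          (𝓝 (2⁻¹ * g x)) := by
        have h2 := (ENNReal.Tendsto.const_mul hx1 (Or.inr hinv2)).add_const (2⁻¹ * g x)
        rwa [mul_zero, zero_add] at h2
      exact ENNReal.Tendsto.sub hb hx2 (Or.inl (ENNReal.mul_ne_top hinv2 hx3.ne))
    have hcint : ∫⁻ x, (2⁻¹ * g x - a₀ x) ∂μ = B - L := by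
      rw [lintegral_sub' ha₀_meas hLne (Filter.Eventually.of_forall ha₀g),
        lintegral_const_mul' _ _ hinv2, ← hBdef, ← hLdef]
    have hdlim : B - L ≤ Filter.liminf
        (fun m => ∫⁻ x, ((2⁻¹ * h (ns (φ m)) x + 2⁻¹ * g x) - a (ns (φ m)) x) ∂μ) atTop := by
      rw [← hcint]
      have e1 : ∫⁻ x, (2⁻¹ * g x - a₀ x) ∂μ = ∫⁻ x, Filter.liminf
          (fun m => (2⁻¹ * h (ns (φ m)) x + 2⁻¹ * g x) - a (ns (φ m)) x) atTop ∂μ :=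
        lintegral_congr_ae (haec.mono fun x hx => hx.liminf_eq.symm)
      rw [e1]
      exact lintegral_liminf_le' hcmeas
    have hsumT : Tendsto (fun m => ∫⁻ x, a (ns (φ m)) x ∂μ
        + ∫⁻ x, ((2⁻¹ * h (ns (φ m)) x + 2⁻¹ * g x) - a (ns (φ m)) x) ∂μ) atTop (𝓝 B) := by
      simp only [hsub]
      exact hBtend
    have hlimsup : Filter.limsup (fun m => ∫⁻ x, a (ns (φ m)) x ∂μ) atTop ≤ L :=
      limsup_le_of_tendsto_add hB hLB hsumT hdlim
    exact tendsto_of_le_liminf_of_limsup_le hliminf hlimsup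
  exact hgoal

end Aux16

/-- Convergence of modulars: if `u_k → u` modularly with constant `λ₀` and
`∫ A(|u|/λ₁) < ∞`, then `∫ A(|u_k|/λ) → ∫ A(|u|/λ)` for every `λ ≥ 2 max{λ₀, λ₁}`; in
particular, norm convergence in `E^A(Ω)` implies convergence of modulars for every `λ > 0`. -/
theorem modular_convergence_of_modular_convergence
    (n : ℕ) (hn : 1 ≤ n) (Ω : Set (En n)) (hΩ : MeasurableSet Ω)
    (A : YoungFunction) (hA : A.NonDegenerate) (hAfin : ∀ t : ℝ≥0, A.toFun t ≠ ⊤) :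
    (∀ (u : ℕ → En n → ℝ) (u₀ : En n → ℝ) (lam₀ lam₁ : ℝ≥0), 0 < lam₀ → 0 < lam₁ →
      (∀ k, MemLA (⇑A) (volume.restrict Ω) (u k)) → MemLA (⇑A) (volume.restrict Ω) u₀ →
      Tendsto (fun k => modular (⇑A) (volume.restrict Ω) lam₀ (fun x => u k x - u₀ x))
        atTop (𝓝 0) →
      modular (⇑A) (volume.restrict Ω) lam₁ u₀ < ⊤ →
      ∀ lam : ℝ≥0, 2 * max lam₀ lam₁ ≤ lam →
        Tendsto (fun k => modular (⇑A) (volume.restrict Ω) lam (u k)) atTop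
          (𝓝 (modular (⇑A) (volume.restrict Ω) lam u₀))) ∧
    (∀ (u : ℕ → En n → ℝ) (u₀ : En n → ℝ),
      (∀ k, MemEA (⇑A) (volume.restrict Ω) (u k)) → MemEA (⇑A) (volume.restrict Ω) u₀ →
      Tendsto (fun k => luxNorm (⇑A) (volume.restrict Ω) (fun x => u k x - u₀ x))
        atTop (𝓝 0) →
      ∀ lam : ℝ≥0, 0 < lam →
        Tendsto (fun k => modular (⇑A) (volume.restrict Ω) lam (u k)) atTop
          (𝓝 (modular (⇑A) (volume.restrict Ω) lam u₀))) := by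
  constructor
  · intro u u₀ lam₀ lam₁ h₀ h₁ hk hk₀ hconv hfin lam hlam
    exact modular_key A hA hAfin u u₀ lam₀ lam₁ h₀ h₁ (fun k => (hk k).1) hk₀.1
      hconv hfin lam hlam
  · intro u u₀ hk hk₀ hnorm lam hlampos
    have hν : (0 : ℝ≥0) < lam / 2 := by positivity
    have hconv : Tendsto
        (fun k => modular (⇑A) (volume.restrict Ω) (lam / 2) (fun x => u k x - u₀ x))
        atTop (𝓝 0) := by
      rw [ENNReal.tendsto_atTop_zero]
      intro ε hε
      obtain ⟨δ, hδpos, hδ1, hδε⟩ : ∃ δ : ℝ≥0, 0 < δ ∧ δ ≤ 1 ∧ (δ : ℝ≥0∞) ≤ ε := by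
        rcases eq_or_ne ε ⊤ with rfl | hεne
        · exact ⟨1, one_pos, le_rfl, le_top⟩
        · refine ⟨min 1 ε.toNNReal, ?_, min_le_left _ _, ?_⟩
          · exact lt_min one_pos (ENNReal.toNNReal_pos (ne_of_gt hε) hεne)
          · calc ((min 1 ε.toNNReal : ℝ≥0) : ℝ≥0∞) ≤ (ε.toNNReal : ℝ≥0∞) := by
                  exact_mod_cast min_le_right _ _
              _ = ε := ENNReal.coe_toNNReal hεne
      have hpos : (0 : ℝ≥0∞) < ((δ * (lam / 2) : ℝ≥0) : ℝ≥0∞) := by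
        exact_mod_cast mul_pos hδpos hν
      have hev : ∀ᶠ k in atTop,
          luxNorm (⇑A) (volume.restrict Ω) (fun x => u k x - u₀ x)
            < ((δ * (lam / 2) : ℝ≥0) : ℝ≥0∞) :=
        hnorm.eventually_lt_const hpos
      rw [Filter.eventually_atTop] at hev
      obtain ⟨N, hN⟩ := hev
      refine ⟨N, fun k hkN => ?_⟩
      have hlt := hN k hkN
      rw [luxNorm, sInf_lt_iff] at hlt
      obtain ⟨l, ⟨lam', hlam'pos, rfl, hmod1⟩, hllt⟩ := hlt
      have hlam'le : lam' ≤ δ * (lam / 2) := by exact_mod_cast hllt.le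
      have hm2 : modular (⇑A) (volume.restrict Ω) (δ * (lam / 2))
          (fun x => u k x - u₀ x) ≤ 1 := by
        refine le_trans (lintegral_mono fun x => ?_) hmod1
        exact yf_mono A (nn_div_le_div hlam'pos hlam'le)
      have hm3 : modular (⇑A) (volume.restrict Ω) (lam / 2) (fun x => u k x - u₀ x)
          ≤ (δ : ℝ≥0∞) * modular (⇑A) (volume.restrict Ω) (δ * (lam / 2))
            (fun x => u k x - u₀ x) := by
        rw [modular, modular, ← lintegral_const_mul' _ _ ENNReal.coe_ne_top]
        refine lintegral_mono fun x => ?_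
        have harg : δ * (‖u k x - u₀ x‖₊ / (δ * (lam / 2)))
            = ‖u k x - u₀ x‖₊ / (lam / 2) := by
          rw [← mul_div_assoc, mul_div_mul_left _ _ hδpos.ne']
        rw [← harg]
        exact yf_scale A hδ1 _
      calc modular (⇑A) (volume.restrict Ω) (lam / 2) (fun x => u k x - u₀ x)
          ≤ (δ : ℝ≥0∞) * modular (⇑A) (volume.restrict Ω) (δ * (lam / 2))
            (fun x => u k x - u₀ x) := hm3
        _ ≤ (δ : ℝ≥0∞) * 1 := mul_le_mul_right hm2 _
        _ = (δ : ℝ≥0∞) := mul_one _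
        _ ≤ ε := hδε
    have h2 : 2 * max (lam / 2) (lam / 2) ≤ lam := by
      rw [max_self, mul_comm, div_mul_cancel₀ _ (two_ne_zero (α := ℝ≥0))]
    exact modular_key A hA hAfin u u₀ (lam / 2) (lam / 2) hν hν (fun k => (hk k).1) hk₀.1
      hconv (hk₀.2 (lam / 2) hν) lam h2

end
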